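/- arXiv:1603.03717 — 2 statements merged into one kernel-verified Lean document; each statement's English description precedes it below -/
import Mathlib

section
/- Let A be an N₁×N₂ complex matrix with at least r_A singular values ≥ ε_A, and let B be an N₂×N₃ complex matrix with at least r_B singular values ≥ ε_B, where ε_A, ε_B > 0. Then the product BA (a matrix from the N₁-dimensional space to the N₃-dimensional space composed appropriately) has at least r_A + r_B − N₂ singular values ≥ ε_A·ε_B. -/
/-!
Write `V_M(ε)` for the span of the eigenvectors of `MᴴM` with eigenvalue `≥ ε²`. Its dimension is
`svCountGe M ε`, it satisfies `ε²‖x‖² ≤ ‖Mx‖²`, and it is the largest subspace doing so: any such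
subspace meets the span of the remaining eigenvectors only in `0`. On
`U = V_A(ε_A) ∩ A⁻¹(V_B(ε_B))` we get `(ε_A ε_B)²‖x‖² ≤ ‖BAx‖²`, and
`dim U ≥ dim V_A(ε_A) + dim V_B(ε_B) - N₂` because `A⁻¹(V_B(ε_B))` has codimension at most
`N₂ - dim V_B(ε_B)` in `ℂ^{N₁}`.
-/

open Matrix Finset

/-- The number of singular values of a matrix `M` (square roots of eigenvalues of `MᴴM`,
with multiplicity) that are at least `ε`. -/
noncomputable def svCountGe {p q : ℕ} (M : Matrix (Fin p) (Fin q) ℂ) (ε : ℝ) : ℕ :=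
  (Finset.univ.filter fun i : Fin q =>
    ε ^ 2 ≤ (Matrix.isHermitian_conjTranspose_mul_self M).eigenvalues i).card

open scoped InnerProductSpace

namespace OrthonormalBasis

variable {𝕜 E ι : Type*} [RCLike 𝕜] [NormedAddCommGroup E] [InnerProductSpace 𝕜 E] [Fintype ι]
  (e : OrthonormalBasis ι 𝕜 E)

lemma inner_eq_zero_of_mem_span_image {s : Set ι} {x : E} (hx : x ∈ Submodule.span 𝕜 (e '' s))
    {i : ι} (hi : i ∉ s) : ⟪e i, x⟫_𝕜 = 0 := by
  rw [← e.coe_toBasis, Module.Basis.mem_span_image] at hx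
  rw [← e.repr_apply_apply, ← e.coe_toBasis_repr_apply]
  exact Finsupp.notMem_support_iff.mp fun h => hi (hx h)

lemma finrank_span_image (s : Finset ι) :
    Module.finrank 𝕜 (Submodule.span 𝕜 (e '' s)) = s.card := by
  rw [Set.image_eq_range]
  exact (finrank_span_eq_card (e.orthonormal.linearIndependent.comp _ Subtype.val_injective)).trans
    (Fintype.card_coe s)

variable {e} {T : E →ₗ[𝕜] E} {μ : ι → ℝ} (hT : ∀ i, T (e i) = (μ i : 𝕜) • e i)
include hT

lemma re_inner_map_self_eq_sum (x : E) :
    RCLike.re ⟪x, T x⟫_𝕜 = ∑ i, μ i * ‖⟪e i, x⟫_𝕜‖ ^ 2 := by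
  have hTx : T x = ∑ i, (μ i * ⟪e i, x⟫_𝕜) • e i := by
    conv_lhs => rw [← e.sum_repr' x]
    simp only [map_sum, map_smul, hT, smul_smul, mul_comm]
  have hcoord (i : ι) : ⟪e i, T x⟫_𝕜 = μ i * ⟪e i, x⟫_𝕜 := by
    rw [hTx, e.orthonormal.inner_right_fintype]
  rw [← e.sum_inner_mul_inner, map_sum]
  refine sum_congr rfl fun i _ => ?_
  rw [hcoord, ← inner_conj_symm, mul_left_comm, RCLike.conj_mul]
  norm_cast

lemma le_re_inner_map_self_of_mem_span {c : ℝ} {x : E}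
    (hx : x ∈ Submodule.span 𝕜 (e '' {i | c ≤ μ i})) : c * ‖x‖ ^ 2 ≤ RCLike.re ⟪x, T x⟫_𝕜 := by
  rw [re_inner_map_self_eq_sum hT, ← e.sum_sq_norm_inner_right, mul_sum]
  refine sum_le_sum fun i _ => ?_
  by_cases hi : c ≤ μ i
  · gcongr
  · simp [e.inner_eq_zero_of_mem_span_image hx hi]

lemma re_inner_map_self_lt_of_mem_span {c : ℝ} {x : E} (hx0 : x ≠ 0)
    (hx : x ∈ Submodule.span 𝕜 (e '' {i | μ i < c})) : RCLike.re ⟪x, T x⟫_𝕜 < c * ‖x‖ ^ 2 := by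
  obtain ⟨j, hj⟩ : ∃ j, ⟪e j, x⟫_𝕜 ≠ 0 := by
    by_contra! h
    exact hx0 (by simpa [h] using (e.sum_repr' x).symm)
  rw [re_inner_map_self_eq_sum hT, ← e.sum_sq_norm_inner_right, mul_sum]
  refine sum_lt_sum (fun i _ => ?_) ⟨j, mem_univ j, ?_⟩
  · by_cases hi : μ i < c
    · gcongr
    · simp [e.inner_eq_zero_of_mem_span_image hx hi]
  · have hjc : μ j < c := by
      by_contra hjc
      exact hj (e.inner_eq_zero_of_mem_span_image hx hjc)
    gcongr

lemma finrank_le_card_of_le_re_inner_map_self {c : ℝ} (V : Submodule 𝕜 E)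
    (hV : ∀ x ∈ V, c * ‖x‖ ^ 2 ≤ RCLike.re ⟪x, T x⟫_𝕜) :
    Module.finrank 𝕜 V ≤ #{i | c ≤ μ i} := by
  have : FiniteDimensional 𝕜 E := .of_basis e.toBasis
  set W := Submodule.span 𝕜 (e '' ↑({i | μ i < c} : Finset ι))
  have hVW : Disjoint V W := by
    refine Submodule.disjoint_def.mpr fun x hxV hxW => by_contra fun hx0 => ?_
    have := re_inner_map_self_lt_of_mem_span hT hx0 (by simpa [W] using hxW)
    exact (hV x hxV).not_gt this
  have hdim := Submodule.finrank_add_finrank_le_of_disjoint hVW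
  rw [e.finrank_span_image, Module.finrank_eq_card_basis e.toBasis] at hdim
  have hsplit := card_filter_add_card_filter_not (s := univ) (fun i => c ≤ μ i)
  simp only [not_le, card_univ] at hsplit
  omega

lemma exists_finrank_eq_card_le_re_inner_map_self (c : ℝ) :
    ∃ V : Submodule 𝕜 E, Module.finrank 𝕜 V = #{i | c ≤ μ i} ∧
      ∀ x ∈ V, c * ‖x‖ ^ 2 ≤ RCLike.re ⟪x, T x⟫_𝕜 :=
  ⟨_, e.finrank_span_image _, fun _ hx => le_re_inner_map_self_of_mem_span hT (by simpa using hx)⟩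

end OrthonormalBasis

namespace Matrix

variable {𝕜 m n : Type*} [RCLike 𝕜] [Fintype m] [DecidableEq m] [Fintype n] [DecidableEq n]

lemma IsHermitian.toEuclideanLin_eigenvectorBasis {A : Matrix n n 𝕜} (hA : A.IsHermitian) (i : n) :
    toEuclideanLin A (hA.eigenvectorBasis i) = (hA.eigenvalues i : 𝕜) • hA.eigenvectorBasis i := by
  rw [toLpLin_apply, hA.mulVec_eigenvectorBasis, WithLp.toLp_smul, WithLp.toLp_ofLp,
    RCLike.real_smul_eq_coe_smul (K := 𝕜)]

lemma re_inner_toEuclideanLin_conjTranspose_mul_self (M : Matrix m n 𝕜) (x : EuclideanSpace 𝕜 n) :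
    RCLike.re ⟪x, toEuclideanLin (Mᴴ * M) x⟫_𝕜 = ‖toEuclideanLin M x‖ ^ 2 := by
  rw [toLpLin_mul_same, toEuclideanLin_conjTranspose_eq_adjoint, LinearMap.comp_apply,
    LinearMap.adjoint_inner_right, inner_self_eq_norm_sq]

end Matrix

namespace Submodule

variable {K V W : Type*} [DivisionRing K] [AddCommGroup V] [Module K V] [AddCommGroup W]
  [Module K W] [FiniteDimensional K V] [FiniteDimensional K W]

lemma finrank_add_finrank_le_finrank_comap_add (f : V →ₗ[K] W) (Q : Submodule K W) :
    Module.finrank K V + Module.finrank K Q ≤ Module.finrank K (Q.comap f) + Module.finrank K W := by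
  have hker : LinearMap.ker (Q.mkQ ∘ₗ f) = Q.comap f := by
    rw [LinearMap.ker_comp, ker_mkQ]
  have hrank := LinearMap.finrank_range_add_finrank_ker (Q.mkQ ∘ₗ f)
  have hrange := finrank_le (LinearMap.range (Q.mkQ ∘ₗ f))
  have hquot := Q.finrank_quotient_add_finrank
  rw [hker] at hrank
  omega

lemma finrank_add_finrank_le_finrank_inf_comap_add (f : V →ₗ[K] W) (P : Submodule K V)
    (Q : Submodule K W) :
    Module.finrank K P + Module.finrank K Q ≤
      Module.finrank K ↥(P ⊓ Q.comap f) + Module.finrank K W := by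
  have hcomap := finrank_add_finrank_le_finrank_comap_add f Q
  have hinf := finrank_sup_add_finrank_inf_eq P (Q.comap f)
  have hsup := finrank_le (P ⊔ Q.comap f)
  omega

end Submodule

section svCountGe

variable {p q : ℕ} (M : Matrix (Fin p) (Fin q) ℂ)

lemma exists_finrank_eq_svCountGe (ε : ℝ) :
    ∃ V : Submodule ℂ (EuclideanSpace ℂ (Fin q)), Module.finrank ℂ V = svCountGe M ε ∧
      ∀ x ∈ V, ε ^ 2 * ‖x‖ ^ 2 ≤ ‖toEuclideanLin M x‖ ^ 2 := by
  simpa only [svCountGe, re_inner_toEuclideanLin_conjTranspose_mul_self] using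
    OrthonormalBasis.exists_finrank_eq_card_le_re_inner_map_self
      (isHermitian_conjTranspose_mul_self M).toEuclideanLin_eigenvectorBasis (ε ^ 2)

lemma finrank_le_svCountGe {ε : ℝ} (V : Submodule ℂ (EuclideanSpace ℂ (Fin q)))
    (hV : ∀ x ∈ V, ε ^ 2 * ‖x‖ ^ 2 ≤ ‖toEuclideanLin M x‖ ^ 2) :
    Module.finrank ℂ V ≤ svCountGe M ε :=
  OrthonormalBasis.finrank_le_card_of_le_re_inner_map_self
    (isHermitian_conjTranspose_mul_self M).toEuclideanLin_eigenvectorBasis V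
    (by simpa only [re_inner_toEuclideanLin_conjTranspose_mul_self] using hV)

end svCountGe

theorem stmt_3_general {N₁ N₂ N₃ : ℕ} (A : Matrix (Fin N₂) (Fin N₁) ℂ) (B : Matrix (Fin N₃) (Fin N₂) ℂ)
    (rA rB : ℕ) (εA εB : ℝ)
    (hA : rA ≤ svCountGe A εA) (hB : rB ≤ svCountGe B εB) :
    (rA : ℤ) + rB - N₂ ≤ svCountGe (B * A) (εA * εB) := by
  obtain ⟨VA, hVA, hAVA⟩ := exists_finrank_eq_svCountGe A εA
  obtain ⟨VB, hVB, hBVB⟩ := exists_finrank_eq_svCountGe B εB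
  have hBA : ∀ x ∈ VA ⊓ VB.comap (toEuclideanLin A),
      (εA * εB) ^ 2 * ‖x‖ ^ 2 ≤ ‖toEuclideanLin (B * A) x‖ ^ 2 := by
    rintro x ⟨hxA, hxB⟩
    calc (εA * εB) ^ 2 * ‖x‖ ^ 2 = εB ^ 2 * (εA ^ 2 * ‖x‖ ^ 2) := by ring
      _ ≤ εB ^ 2 * ‖toEuclideanLin A x‖ ^ 2 := by gcongr; exact hAVA x hxA
      _ ≤ ‖toEuclideanLin B (toEuclideanLin A x)‖ ^ 2 := hBVB _ hxB
      _ = ‖toEuclideanLin (B * A) x‖ ^ 2 := by rw [toLpLin_mul_same, LinearMap.comp_apply]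
  have hdim := Submodule.finrank_add_finrank_le_finrank_inf_comap_add (toEuclideanLin A) VA VB
  have hBAcount := finrank_le_svCountGe (B * A) _ hBA
  rw [finrank_euclideanSpace_fin] at hdim
  omega

/-- If `A : ℂ^{N₁} → ℂ^{N₂}` has at least `r_A` singular values `≥ ε_A` and
`B : ℂ^{N₂} → ℂ^{N₃}` has at least `r_B` singular values `≥ ε_B` (with `ε_A, ε_B > 0`),
then `B·A` has at least `r_A + r_B − N₂` singular values `≥ ε_A·ε_B`. -/
theorem stmt_3 {N₁ N₂ N₃ : ℕ} (A : Matrix (Fin N₂) (Fin N₁) ℂ) (B : Matrix (Fin N₃) (Fin N₂) ℂ)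
    (rA rB : ℕ) (εA εB : ℝ) (hεA : 0 < εA) (hεB : 0 < εB)
    (hA : rA ≤ svCountGe A εA) (hB : rB ≤ svCountGe B εB) :
    (rA : ℤ) + rB - N₂ ≤ svCountGe (B * A) (εA * εB) :=
  stmt_3_general A B rA rB εA εB hA hB
end

section
/- Let A be a random positive semidefinite random matrix of size D×D (measurable over a probability space) with E[tr(A)] ≥ (1 − δ)·α·D and E[tr(A²)] ≤ (1 + δ)·α²·D for some α > 0 and 0 ≤ δ < 1. Then there exists a sample point where rank(A) ≥ D·(1−δ)²/(1+δ). -/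
open Matrix MeasureTheory
open scoped ComplexOrder

/-!
For a Hermitian matrix, Cauchy–Schwarz over its nonzero eigenvalues gives
`(tr A)² ≤ rank A · tr A²`. Let `ω₀` maximise the rank. Then pointwise
`(tr A)² ≤ rank A(ω₀) · tr A²`, and Jensen (`E[X]² ≤ E[X²]`) turns this into
`E[tr A]² ≤ rank A(ω₀) · E[tr A²]`; the hypotheses bound the left side from below by
`((1-δ)αD)²` and `E[tr A²]` from above by `(1+δ)α²D`, whose quotient is `D(1-δ)²/(1+δ)`.
-/

namespace Matrix

variable {n 𝕜 : Type*} [Fintype n] [DecidableEq n] [RCLike 𝕜]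

lemma trace_conjStarAlgAut (U : unitary (Matrix n n 𝕜)) (X : Matrix n n 𝕜) :
    (Unitary.conjStarAlgAut 𝕜 _ U X).trace = X.trace := by
  rw [Unitary.conjStarAlgAut_apply, trace_mul_cycle, Unitary.coe_star_mul_self, one_mul]

namespace IsHermitian

variable {A : Matrix n n 𝕜}

lemma trace_pow_eq_sum_eigenvalues_pow (hA : A.IsHermitian) (k : ℕ) :
    (A ^ k).trace = ∑ i, (hA.eigenvalues i : 𝕜) ^ k := by
  conv_lhs => rw [hA.spectral_theorem, ← map_pow, trace_conjStarAlgAut, diagonal_pow]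
  simp [trace_diagonal]

lemma re_trace_eq_sum_eigenvalues (hA : A.IsHermitian) :
    RCLike.re A.trace = ∑ i, hA.eigenvalues i := by
  simp [hA.trace_eq_sum_eigenvalues]

lemma re_trace_sq_eq_sum_eigenvalues_sq (hA : A.IsHermitian) :
    RCLike.re (A ^ 2).trace = ∑ i, hA.eigenvalues i ^ 2 := by
  rw [hA.trace_pow_eq_sum_eigenvalues_pow, map_sum]
  simp_rw [← RCLike.ofReal_pow, RCLike.ofReal_re]

lemma re_trace_sq_nonneg (hA : A.IsHermitian) : 0 ≤ RCLike.re (A ^ 2).trace := by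
  rw [hA.re_trace_sq_eq_sum_eigenvalues_sq]
  positivity

lemma re_trace_sq_le_rank_mul (hA : A.IsHermitian) :
    RCLike.re A.trace ^ 2 ≤ A.rank * RCLike.re (A ^ 2).trace := by
  classical
  set s := Finset.univ.filter fun i => hA.eigenvalues i ≠ 0
  have hrank : A.rank = s.card := by
    rw [hA.rank_eq_card_non_zero_eigs, Fintype.card_subtype]
  rw [hA.re_trace_eq_sum_eigenvalues, hA.re_trace_sq_eq_sum_eigenvalues_sq, hrank,
    ← Finset.sum_filter_ne_zero]
  calc (∑ i ∈ s, hA.eigenvalues i) ^ 2 ≤ s.card * ∑ i ∈ s, hA.eigenvalues i ^ 2 :=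
        sq_sum_le_card_mul_sum_sq
    _ ≤ s.card * ∑ i, hA.eigenvalues i ^ 2 :=
        mul_le_mul_of_nonneg_left (Finset.sum_le_sum_of_subset_of_nonneg s.subset_univ
          fun i _ _ => sq_nonneg _) s.card.cast_nonneg

end IsHermitian

end Matrix

section Probability

variable {Ω : Type*} [MeasurableSpace Ω] {μ : Measure Ω} [IsProbabilityMeasure μ]

lemma sq_integral_le_integral_sq {f : Ω → ℝ} (hf : MemLp f 2 μ) :
    (∫ ω, f ω ∂μ) ^ 2 ≤ ∫ ω, f ω ^ 2 ∂μ := by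
  have := ProbabilityTheory.variance_nonneg f μ
  rw [ProbabilityTheory.variance_eq_sub hf] at this
  simpa using this

lemma sq_integral_le_mul_integral_of_sq_le {f g : Ω → ℝ} {c : ℝ} (hf : Integrable f μ)
    (hg : Integrable g μ) (hfg : ∀ ω, f ω ^ 2 ≤ c * g ω) :
    (∫ ω, f ω ∂μ) ^ 2 ≤ c * ∫ ω, g ω ∂μ := by
  have hf_sq : Integrable (fun ω => f ω ^ 2) μ :=
    (hg.const_mul c).mono' (hf.1.pow 2) (.of_forall fun ω => by simpa using hfg ω)
  calc (∫ ω, f ω ∂μ) ^ 2 ≤ ∫ ω, f ω ^ 2 ∂μ :=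
        sq_integral_le_integral_sq ((memLp_two_iff_integrable_sq hf.1).2 hf_sq)
    _ ≤ ∫ ω, c * g ω ∂μ := integral_mono hf_sq (hg.const_mul c) hfg
    _ = c * ∫ ω, g ω ∂μ := integral_const_mul c _

end Probability

lemma exists_forall_le_of_bddAbove_range {ι : Type*} [Nonempty ι] {f : ι → ℕ}
    (hf : BddAbove (Set.range f)) : ∃ i₀, ∀ i, f i ≤ f i₀ := by
  obtain ⟨i₀, hi₀⟩ := Nat.sSup_mem (Set.range_nonempty f) hf
  exact ⟨i₀, fun i => hi₀ ▸ le_csSup hf ⟨i, rfl⟩⟩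

theorem stmt_16_general {Ω : Type*} [MeasurableSpace Ω] (μ : MeasureTheory.Measure Ω)
    [IsProbabilityMeasure μ] {D : ℕ} (A : Ω → Matrix (Fin D) (Fin D) ℂ)
    (hpsd : ∀ ω, (A ω).PosSemidef)
    (α δ : ℝ) (hα : 0 < α) (hδ0 : 0 ≤ δ) (hδ1 : δ < 1)
    (hint1 : Integrable (fun ω => (A ω).trace.re) μ)
    (hint2 : Integrable (fun ω => ((A ω) ^ 2).trace.re) μ)
    (h1 : (1 - δ) * α * D ≤ ∫ ω, (A ω).trace.re ∂μ)
    (h2 : (∫ ω, ((A ω) ^ 2).trace.re ∂μ) ≤ (1 + δ) * α ^ 2 * D) :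
    ∃ ω : Ω, (D : ℝ) * (1 - δ) ^ 2 / (1 + δ) ≤ ((A ω).rank : ℝ) := by
  have := nonempty_of_isProbabilityMeasure μ
  obtain ⟨ω₀, hmax⟩ := exists_forall_le_of_bddAbove_range (f := fun ω => (A ω).rank)
    ⟨D, by rintro _ ⟨ω, rfl⟩; exact (A ω).rank_le_width⟩
  have hpointwise (ω : Ω) :
      (A ω).trace.re ^ 2 ≤ (A ω₀).rank * ((A ω) ^ 2).trace.re := by
    have hA := (hpsd ω).1
    calc (A ω).trace.re ^ 2 ≤ (A ω).rank * ((A ω) ^ 2).trace.re := hA.re_trace_sq_le_rank_mul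
      _ ≤ (A ω₀).rank * ((A ω) ^ 2).trace.re := by
        gcongr
        · exact hA.re_trace_sq_nonneg
        · exact hmax ω
  have hkey := sq_integral_le_mul_integral_of_sq_le hint1 hint2 hpointwise
  have hr : (D : ℝ) * (1 - δ) ^ 2 / (1 + δ) = ((1 - δ) * α * D) ^ 2 / ((1 + δ) * α ^ 2 * D) := by
    rcases (Nat.cast_nonneg D : (0 : ℝ) ≤ D).eq_or_lt with hD | hD
    · simp [← hD]
    · field_simp
  have hδ : 0 < 1 - δ := by linarith
  refine ⟨ω₀, ?_⟩
  rw [hr]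
  refine div_le_of_le_mul₀ (by positivity) (Nat.cast_nonneg _) ?_
  calc ((1 - δ) * α * D) ^ 2 ≤ (∫ ω, (A ω).trace.re ∂μ) ^ 2 := by gcongr
    _ ≤ (A ω₀).rank * ∫ ω, ((A ω) ^ 2).trace.re ∂μ := hkey
    _ ≤ (A ω₀).rank * ((1 + δ) * α ^ 2 * D) := by gcongr

/-- If a random `D×D` PSD matrix `A` satisfies `E[tr A] ≥ (1−δ)·α·D` and
`E[tr A²] ≤ (1+δ)·α²·D` with `α > 0`, `0 ≤ δ < 1`, then at some sample point
`rank A ≥ D·(1−δ)²/(1+δ)`. -/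
theorem stmt_16 {Ω : Type*} [MeasurableSpace Ω] (μ : MeasureTheory.Measure Ω)
    [IsProbabilityMeasure μ] {D : ℕ} (A : Ω → Matrix (Fin D) (Fin D) ℂ)
    (hmeas : ∀ i j, Measurable fun ω => A ω i j) (hpsd : ∀ ω, (A ω).PosSemidef)
    (α δ : ℝ) (hα : 0 < α) (hδ0 : 0 ≤ δ) (hδ1 : δ < 1)
    (hint1 : Integrable (fun ω => (A ω).trace.re) μ)
    (hint2 : Integrable (fun ω => ((A ω) ^ 2).trace.re) μ)
    (h1 : (1 - δ) * α * D ≤ ∫ ω, (A ω).trace.re ∂μ)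
    (h2 : (∫ ω, ((A ω) ^ 2).trace.re ∂μ) ≤ (1 + δ) * α ^ 2 * D) :
    ∃ ω : Ω, (D : ℝ) * (1 - δ) ^ 2 / (1 + δ) ≤ ((A ω).rank : ℝ) :=
  stmt_16_general μ A hpsd α δ hα hδ0 hδ1 hint1 hint2 h1 h2
end
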